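/- arXiv:math/0307004 — 2 statements merged into one kernel-verified Lean document; each statement's English description precedes it below -/
import Mathlib

section
/- Let D, D' be two polyhedral scatterers with D ≠ D', with connected exteriors G = ℝ^N \ D and G' = ℝ^N \ D', and let G̃ be the connected component of ℝ^N \ (D ∪ D') containing the exterior of a large ball. If ∂G̃ ⊆ D ∩ D', then D = D' = ℝ^N \ G̃. -/
open Metric Set

/-- A cell: the closure of a (relatively) open subset of an affine hyperplane. -/
def IsCell {N : ℕ} (C : Set (EuclideanSpace ℝ (Fin N))) : Prop :=
  ∃ (a : EuclideanSpace ℝ (Fin N)) (c : ℝ) (U : Set (EuclideanSpace ℝ (Fin N))),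
    a ≠ 0 ∧ IsOpen U ∧ C = closure (U ∩ {x | (inner ℝ a x : ℝ) = c})

/-- A polyhedral scatterer: a compact set with connected complement whose
boundary is a finite union of cells. -/
def IsPolyhedralScatterer {N : ℕ} (D : Set (EuclideanSpace ℝ (Fin N))) : Prop :=
  IsCompact D ∧ IsConnected Dᶜ ∧
    ∃ (n : ℕ) (C : Fin n → Set (EuclideanSpace ℝ (Fin N))),
      (∀ i, IsCell (C i)) ∧ frontier Dᶜ = ⋃ i, C i

/-! A nonempty open `G ⊆ Dᶜ` with `∂G ⊆ D` is relatively clopen in `Dᶜ`, so it is all of `Dᶜ`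
once `Dᶜ` is connected. Applied to the component `G'` of `(D ∪ D')ᶜ`, this gives
`Dᶜ = G' = D'ᶜ`. -/

section

variable {X : Type*} [TopologicalSpace X]

theorem IsPreconnected.subset_of_disjoint_frontier {s u : Set X} (hs : IsPreconnected s)
    (hu : IsOpen u) (hsu : (s ∩ u).Nonempty) (hdisj : Disjoint (frontier u) s) : s ⊆ u :=
  hs.subset_of_closure_inter_subset hu hsu fun x ⟨hx_closure, hxs⟩ => by
    by_contra hxu
    rw [hu.frontier_eq] at hdisj
    exact hdisj.notMem_of_mem_right hxs ⟨hx_closure, hxu⟩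

theorem IsPreconnected.compl_eq_of_frontier_subset {D G : Set X} (hD : IsPreconnected Dᶜ)
    (hG : IsOpen G) (hGD : G ⊆ Dᶜ) (hfront : frontier G ⊆ D) (hne : G.Nonempty) :
    Dᶜ = G := by
  refine subset_antisymm (hD.subset_of_disjoint_frontier hG ?_ ?_) hGD
  · obtain ⟨x, hx⟩ := hne
    exact ⟨x, hGD hx, hx⟩
  · exact disjoint_compl_right.mono_left hfront

end

theorem stmt15_general {N : ℕ} (D D' : Set (EuclideanSpace ℝ (Fin N)))
    (hD : IsPolyhedralScatterer D) (hD' : IsPolyhedralScatterer D')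
    (G' : Set (EuclideanSpace ℝ (Fin N)))
    (x₀ : EuclideanSpace ℝ (Fin N)) (hx₀ : x₀ ∈ (D ∪ D')ᶜ)
    (hG' : G' = connectedComponentIn (D ∪ D')ᶜ x₀)
    (hfront : frontier G' ⊆ D ∩ D') :
    D = D' ∧ D = G'ᶜ := by
  have hG'_open : IsOpen G' :=
    hG' ▸ (hD.1.isClosed.union hD'.1.isClosed).isOpen_compl.connectedComponentIn
  have hG'_ne : G'.Nonempty := ⟨x₀, hG' ▸ mem_connectedComponentIn hx₀⟩
  have hG'_sub : G' ⊆ Dᶜ ∩ D'ᶜ := compl_union D D' ▸ hG' ▸ connectedComponentIn_subset _ _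
  have hDG' : Dᶜ = G' := hD.2.1.isPreconnected.compl_eq_of_frontier_subset hG'_open
    (hG'_sub.trans inter_subset_left) (hfront.trans inter_subset_left) hG'_ne
  have hD'G' : D'ᶜ = G' := hD'.2.1.isPreconnected.compl_eq_of_frontier_subset hG'_open
    (hG'_sub.trans inter_subset_right) (hfront.trans inter_subset_right) hG'_ne
  exact ⟨compl_injective (hDG'.trans hD'G'.symm), compl_compl D ▸ congrArg compl hDG'⟩

/-- if the boundary of the unbounded component of the common
exterior of two polyhedral scatterers lies in both scatterers, the scatterers
coincide and equal the complement of that component. -/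
theorem stmt15 {N : ℕ} (D D' : Set (EuclideanSpace ℝ (Fin N)))
    (hD : IsPolyhedralScatterer D) (hD' : IsPolyhedralScatterer D')
    (hne : D ≠ D')
    (G' : Set (EuclideanSpace ℝ (Fin N)))
    (x₀ : EuclideanSpace ℝ (Fin N)) (hx₀ : x₀ ∈ (D ∪ D')ᶜ)
    (hG' : G' = connectedComponentIn (D ∪ D')ᶜ x₀)
    (R : ℝ) (hext : {x : EuclideanSpace ℝ (Fin N) | R < ‖x‖} ⊆ G')
    (hfront : frontier G' ⊆ D ∩ D') :
    D = D' ∧ D = G'ᶜ :=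
  stmt15_general D D' hD hD' G' x₀ hx₀ hG' hfront
end

section
/- Let D, D' be polyhedral scatterers with G̃ the connected component of ℝ^N \ (D ∪ D') containing the exterior of a large ball, and suppose ∂G̃ is not contained in D ∩ D'. Then (after possibly swapping D and D') there exists a point x' in (∂G' \ D) ∩ ∂G̃ lying in the relative interior of one of the cells of ∂G', and hence a hyperplane Π' and r > 0 with Π' ∩ B_r(x') ⊆ (∂G' \ D) ∩ ∂G̃. -/
open Metric Set

/-- For scatterers `D₁` (to be avoided) and `D₂` (whose boundary is probed):
there is a point of `(∂(D₂ᶜ) \ D₁) ∩ ∂G'` around which a full flat hyperplane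
patch stays inside `(∂(D₂ᶜ) \ D₁) ∩ ∂G'`. -/
def FlatPatchOn {N : ℕ} (D₁ D₂ G' : Set (EuclideanSpace ℝ (Fin N))) : Prop :=
  ∃ x' ∈ (frontier D₂ᶜ \ D₁) ∩ frontier G',
    ∃ (a : EuclideanSpace ℝ (Fin N)) (c : ℝ) (r : ℝ), a ≠ 0 ∧ 0 < r ∧
      x' ∈ {x | (inner ℝ a x : ℝ) = c} ∧
      {x | (inner ℝ a x : ℝ) = c} ∩ ball x' r ⊆ (frontier D₂ᶜ \ D₁) ∩ frontier G'

/-!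
Pick `z ∈ ∂G'` outside `D`, say. Near `z` the boundary `∂G'` lies in `∂D'`, a finite union of
closed cells, so by Baire some cell contains all of `∂G'` in a ball `B(x, δ)` around a point
`x ∈ ∂G'`. Each open half-ball on either side of that cell's hyperplane is connected and misses
`∂G'`, hence lies inside `G'` or is disjoint from it. If exactly one is inside, the hyperplane
patch in `B(x, δ)` is part of `∂G'`. If both are, `B(x, δ) ⊆ closure G'`, so every point of
`∂D'` in the ball is on `∂G'`, and a cell of `∂D'` through `x` contains a hyperplane patch
near `x`.
-/

open Filter Topology

section Topology

variable {X : Type*} [TopologicalSpace X]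

theorem IsOpen.frontier_connectedComponentIn_subset [LocallyConnectedSpace X] {U : Set X}
    (hU : IsOpen U) (x : X) : frontier (connectedComponentIn U x) ⊆ Uᶜ := by
  intro p hp hpU
  obtain ⟨y, hyp, hyx⟩ := mem_closure_iff.mp hp.1 _ hU.connectedComponentIn
    (mem_connectedComponentIn hpU)
  have hpx : p ∈ connectedComponentIn U x := by
    rw [connectedComponentIn_eq hyx, ← connectedComponentIn_eq hyp]
    exact mem_connectedComponentIn hpU
  exact hp.2 (by rwa [hU.connectedComponentIn.interior_eq])

theorem mem_frontier_of_mem_closure_of_disjoint {G H H' : Set X} (hG : IsOpen G)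
    (hH : H ⊆ G) (hH' : Disjoint H' G) {p : X} (hp : p ∈ closure H) (hp' : p ∈ closure H') :
    p ∈ frontier G := by
  refine ⟨closure_mono hH hp, ?_⟩
  rw [hG.interior_eq]
  exact (hH'.closure_left hG).notMem_of_mem_left hp'

theorem IsPreconnected.subset_or_disjoint_of_disjoint_frontier {s G : Set X}
    (hs : IsPreconnected s) (hG : IsOpen G) (hsG : Disjoint s (frontier G)) :
    s ⊆ G ∨ Disjoint s G := by
  have hcover : s ⊆ G ∪ (closure G)ᶜ := by
    intro y hy
    by_cases hyG : y ∈ closure G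
    · refine Or.inl (by_contra fun hyG' => hsG.notMem_of_mem_left hy ⟨hyG, ?_⟩)
      rwa [hG.interior_eq]
    · exact Or.inr hyG
  refine (hs.subset_or_subset hG isClosed_closure.isOpen_compl
    (disjoint_compl_right.mono_left subset_closure) hcover).imp id fun h => ?_
  exact (disjoint_compl_left.mono_right subset_closure).mono_left h

theorem BaireSpace.exists_isOpen_subset_inter [BaireSpace X] {ι : Type*} [Countable ι]
    {C : ι → Set X} (hC : ∀ i, IsClosed (C i)) {U : Set X} (hU : IsOpen U) (hne : U.Nonempty)
    (hcov : U ⊆ ⋃ i, C i) : ∃ i V, IsOpen V ∧ V.Nonempty ∧ V ⊆ U ∩ C i := by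
  obtain ⟨i₀, -⟩ := mem_iUnion.mp (hcov hne.some_mem)
  have hdense := dense_iUnion_interior_of_closed (f := fun i => C i ∪ Uᶜ)
    (fun i => (hC i).union hU.isClosed_compl) <| eq_univ_of_forall fun y => by
      by_cases hy : y ∈ U
      · obtain ⟨i, hi⟩ := mem_iUnion.mp (hcov hy)
        exact mem_iUnion.mpr ⟨i, Or.inl hi⟩
      · exact mem_iUnion.mpr ⟨i₀, Or.inr hy⟩
  obtain ⟨y, hyU, hy⟩ := hdense.inter_open_nonempty U hU hne
  obtain ⟨i, hi⟩ := mem_iUnion.mp hy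
  refine ⟨i, interior (C i ∪ Uᶜ) ∩ U, isOpen_interior.inter hU, ⟨y, hi, hyU⟩, ?_⟩
  exact fun w ⟨hw, hwU⟩ => ⟨hwU, (interior_subset hw).resolve_right (not_not.mpr hwU)⟩

end Topology

theorem IsClosed.exists_ball_inter_subset_of_subset_iUnion {X : Type*} [MetricSpace X]
    [CompleteSpace X] {ι : Type*} [Countable ι] {K U : Set X} {C : ι → Set X}
    (hK : IsClosed K) (hU : IsOpen U) (hC : ∀ i, IsClosed (C i)) (hKU : (K ∩ U).Nonempty)
    (hcov : K ∩ U ⊆ ⋃ i, C i) : ∃ i, ∃ x ∈ K, ∃ δ > 0, ball x δ ⊆ U ∧ K ∩ ball x δ ⊆ C i := by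
  have : CompleteSpace K := hK.completeSpace_coe
  obtain ⟨u, huK, huU⟩ := hKU
  obtain ⟨i, V, hV, ⟨⟨x, hxK⟩, hxV⟩, hVC⟩ :=
    BaireSpace.exists_isOpen_subset_inter (fun i => (hC i).preimage continuous_subtype_val)
      (hU.preimage continuous_subtype_val) ⟨⟨u, huK⟩, huU⟩
      fun y hy => by simpa using hcov ⟨y.2, hy⟩
  obtain ⟨O, hO, rfl⟩ := isOpen_induced_iff.mp hV
  obtain ⟨δ, hδ, hδO⟩ := Metric.isOpen_iff.mp (hO.inter hU) x ⟨hxV, (hVC hxV).1⟩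
  exact ⟨i, x, hxK, δ, hδ, fun y hy => (hδO hy).2,
    fun y ⟨hyK, hy⟩ => (hVC (show (⟨y, hyK⟩ : K) ∈ Subtype.val ⁻¹' O from (hδO hy).1)).2⟩

section Hyperplane

variable {E : Type*} [NormedAddCommGroup E] [InnerProductSpace ℝ E]

theorem mem_closure_inter_lt_inner {s : Set E} (hs : IsOpen s) {a p : E} (ha : a ≠ 0) {c : ℝ}
    (hp : p ∈ s) (hpc : inner ℝ a p = c) : p ∈ closure (s ∩ {y | c < inner ℝ a y}) := by
  have hlim : Tendsto (fun t : ℝ => p + t • a) (𝓝[>] 0) (𝓝 p) := by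
    have : Tendsto (fun t : ℝ => p + t • a) (𝓝 0) (𝓝 (p + (0 : ℝ) • a)) :=
      (continuous_const.add (continuous_id.smul continuous_const)).tendsto 0
    simpa using this.mono_left nhdsWithin_le_nhds
  refine mem_closure_of_tendsto hlim ?_
  filter_upwards [hlim.eventually (hs.mem_nhds hp), self_mem_nhdsWithin] with t hts ht
  refine ⟨hts, ?_⟩
  change c < inner ℝ a (p + t • a)
  rw [inner_add_right, inner_smul_right, hpc, real_inner_self_eq_norm_sq]
  have : 0 < ‖a‖ := norm_pos_iff.mpr ha
  exact lt_add_of_pos_right c (mul_pos ht (by positivity))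

theorem mem_closure_inter_inner_lt {s : Set E} (hs : IsOpen s) {a p : E} (ha : a ≠ 0) {c : ℝ}
    (hp : p ∈ s) (hpc : inner ℝ a p = c) : p ∈ closure (s ∩ {y | inner ℝ a y < c}) := by
  simpa only [inner_neg_left, neg_lt_neg_iff] using
    mem_closure_inter_lt_inner hs (neg_ne_zero.mpr ha) hp (c := -c) (by rw [inner_neg_left, hpc])

theorem IsOpen.hyperplane_inter_ball_subset_frontier_or_ball_subset_closure {G : Set E}
    (hG : IsOpen G) {a x : E} (ha : a ≠ 0) {c δ : ℝ} (hδ : 0 < δ) (hx : x ∈ frontier G)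
    (hfr : frontier G ∩ ball x δ ⊆ {y | inner ℝ a y = c}) :
    {y | inner ℝ a y = c} ∩ ball x δ ⊆ frontier G ∨ ball x δ ⊆ closure G := by
  set upper := ball x δ ∩ {y | c < inner ℝ a y}
  set lower := ball x δ ∩ {y | inner ℝ a y < c}
  have hlin : IsLinearMap ℝ fun y : E => inner ℝ a y :=
    ⟨fun u v => inner_add_right a u v, fun t u => inner_smul_right a u t⟩
  have hside : ∀ H ⊆ ball x δ, Convex ℝ H → (∀ y ∈ H, inner ℝ a y ≠ c) →
      H ⊆ G ∨ Disjoint H G := fun H hHb hH hHc =>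
    hH.isPreconnected.subset_or_disjoint_of_disjoint_frontier hG <|
      Set.disjoint_left.mpr fun y hyH hyG => hHc y hyH (hfr ⟨hyG, hHb hyH⟩)
  have hupper := hside upper inter_subset_left
    ((convex_ball x δ).inter (convex_halfSpace_gt hlin c)) fun y hy => hy.2.ne'
  have hlower := hside lower inter_subset_left
    ((convex_ball x δ).inter (convex_halfSpace_lt hlin c)) fun y hy => hy.2.ne
  rcases hupper with hupper | hupper <;> rcases hlower with hlower | hlower
  · refine Or.inr fun y hy => ?_
    rcases lt_trichotomy (inner ℝ a y) c with hyc | hyc | hyc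
    · exact subset_closure (hlower ⟨hy, hyc⟩)
    · exact closure_mono hupper (mem_closure_inter_lt_inner isOpen_ball ha hy hyc)
    · exact subset_closure (hupper ⟨hy, hyc⟩)
  · exact Or.inl fun y ⟨hyc, hy⟩ => mem_frontier_of_mem_closure_of_disjoint hG hupper hlower
      (mem_closure_inter_lt_inner isOpen_ball ha hy hyc)
      (mem_closure_inter_inner_lt isOpen_ball ha hy hyc)
  · exact Or.inl fun y ⟨hyc, hy⟩ => mem_frontier_of_mem_closure_of_disjoint hG hlower hupper
      (mem_closure_inter_inner_lt isOpen_ball ha hy hyc)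
      (mem_closure_inter_lt_inner isOpen_ball ha hy hyc)
  · exfalso
    obtain ⟨q, hqb, hqG⟩ := mem_closure_iff.mp hx.1 _ isOpen_ball (mem_ball_self hδ)
    have hqc : inner ℝ a q = c := by
      rcases lt_trichotomy (inner ℝ a q) c with hqc | hqc | hqc
      · exact absurd hqG (hlower.notMem_of_mem_left ⟨hqb, hqc⟩)
      · exact hqc
      · exact absurd hqG (hupper.notMem_of_mem_left ⟨hqb, hqc⟩)
    obtain ⟨y, ⟨hyG, hyb⟩, hyc⟩ := closure_nonempty_iff.mp
      ⟨q, mem_closure_inter_lt_inner (hG.inter isOpen_ball) ha ⟨hqG, hqb⟩ hqc⟩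
    exact hupper.notMem_of_mem_left ⟨hyb, hyc⟩ hyG

def HasFlatPatch (S : Set E) : Prop :=
  ∃ (x a : E) (c r : ℝ), a ≠ 0 ∧ 0 < r ∧ inner ℝ a x = c ∧ {y | inner ℝ a y = c} ∩ ball x r ⊆ S

theorem HasFlatPatch.mono {S T : Set E} (hS : HasFlatPatch S) (hST : S ⊆ T) : HasFlatPatch T :=
  let ⟨x, a, c, r, ha, hr, hx, hsub⟩ := hS
  ⟨x, a, c, r, ha, hr, hx, hsub.trans hST⟩

end Hyperplane

section Cell

variable {N : ℕ}

theorem IsCell.exists_subset_hyperplane {C : Set (EuclideanSpace ℝ (Fin N))} (hC : IsCell C) :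
    ∃ a c, a ≠ 0 ∧ C ⊆ {y | inner ℝ a y = c} := by
  obtain ⟨a, c, U, ha, -, rfl⟩ := hC
  exact ⟨a, c, ha, closure_minimal inter_subset_right
    (isClosed_eq (continuous_const.inner continuous_id) continuous_const)⟩

theorem IsCell.isClosed {C : Set (EuclideanSpace ℝ (Fin N))} (hC : IsCell C) : IsClosed C := by
  obtain ⟨a, c, U, -, -, rfl⟩ := hC
  exact isClosed_closure

theorem IsCell.hasFlatPatch_inter {C U : Set (EuclideanSpace ℝ (Fin N))} (hC : IsCell C)
    (hU : IsOpen U) (hCU : (C ∩ U).Nonempty) : HasFlatPatch (C ∩ U) := by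
  obtain ⟨a, c, V, ha, hV, rfl⟩ := hC
  obtain ⟨w, ⟨hwV, hwc⟩, hwU⟩ := (closure_inter_open_nonempty_iff hU).mp hCU
  obtain ⟨r, hr, hrVU⟩ := Metric.isOpen_iff.mp (hV.inter hU) w ⟨hwV, hwU⟩
  exact ⟨w, a, c, r, ha, hr, hwc, fun y ⟨hyc, hyb⟩ =>
    ⟨subset_closure ⟨(hrVU hyb).1, hyc⟩, (hrVU hyb).2⟩⟩

end Cell

theorem flatPatchOn_of_hasFlatPatch {N : ℕ} {D₁ D₂ G : Set (EuclideanSpace ℝ (Fin N))}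
    (h : HasFlatPatch ((frontier D₂ᶜ \ D₁) ∩ frontier G)) : FlatPatchOn D₁ D₂ G :=
  let ⟨x, a, c, r, ha, hr, hx, hsub⟩ := h
  ⟨x, hsub ⟨hx, mem_ball_self hr⟩, a, c, r, ha, hr, hx, hsub⟩

theorem flatPatchOn_of_mem_frontier {N : ℕ} {ι : Type*} [Countable ι]
    {D₁ D₂ G : Set (EuclideanSpace ℝ (Fin N))} {C : ι → Set (EuclideanSpace ℝ (Fin N))}
    (hD₁ : IsClosed D₁) (hC : ∀ i, IsCell (C i)) (hD₂ : frontier D₂ᶜ = ⋃ i, C i)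
    (hG : IsOpen G) (hGD : G ⊆ (D₁ ∪ D₂)ᶜ) (hfr : frontier G ⊆ D₁ ∪ D₂)
    {z : EuclideanSpace ℝ (Fin N)} (hz : z ∈ frontier G) (hzD : z ∉ D₁) :
    FlatPatchOn D₁ D₂ G := by
  have hGD₂ : G ⊆ D₂ᶜ := fun y hy hyD => hGD hy (Or.inr hyD)
  have hfrD₂ : frontier G \ D₁ ⊆ frontier D₂ᶜ := fun y ⟨hy, hyD₁⟩ =>
    ⟨closure_mono hGD₂ hy.1, fun hyint => interior_subset hyint ((hfr hy).resolve_left hyD₁)⟩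
  have hD₂G : Disjoint (frontier D₂ᶜ) G := Set.disjoint_right.mpr fun y hyG hy =>
    hy.2 (interior_maximal hGD₂ hG hyG)
  obtain ⟨i, x, hx, δ, hδ, hxD₁, hxC⟩ :=
    isClosed_frontier.exists_ball_inter_subset_of_subset_iUnion hD₁.isOpen_compl
      (fun i => (hC i).isClosed) ⟨z, hz, hzD⟩ (hD₂ ▸ hfrD₂)
  obtain ⟨a, c, ha, hCa⟩ := (hC i).exists_subset_hyperplane
  apply flatPatchOn_of_hasFlatPatch
  rcases hG.hyperplane_inter_ball_subset_frontier_or_ball_subset_closure ha hδ hx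
    (hxC.trans hCa) with hflat | hdense
  · exact ⟨x, a, c, δ, ha, hδ, hCa (hxC ⟨hx, mem_ball_self hδ⟩), fun y hy =>
      ⟨⟨hfrD₂ ⟨hflat hy, hxD₁ hy.2⟩, hxD₁ hy.2⟩, hflat hy⟩⟩
  · obtain ⟨j, hj⟩ := mem_iUnion.mp (hD₂ ▸ hfrD₂ ⟨hx, hxD₁ (mem_ball_self hδ)⟩)
    refine ((hC j).hasFlatPatch_inter isOpen_ball ⟨x, hj, mem_ball_self hδ⟩).mono ?_
    rintro y ⟨hyC, hyb⟩
    have hyD₂ : y ∈ frontier D₂ᶜ := hD₂ ▸ mem_iUnion_of_mem j hyC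
    exact ⟨⟨hyD₂, hxD₁ hyb⟩, hdense hyb, by
      rw [hG.interior_eq]; exact hD₂G.notMem_of_mem_left hyD₂⟩

theorem stmt16_general {N : ℕ} (D D' : Set (EuclideanSpace ℝ (Fin N)))
    (hD : IsPolyhedralScatterer D) (hD' : IsPolyhedralScatterer D')
    (G' : Set (EuclideanSpace ℝ (Fin N)))
    (x₀ : EuclideanSpace ℝ (Fin N))
    (hG' : G' = connectedComponentIn (D ∪ D')ᶜ x₀)
    (hfront : ¬ frontier G' ⊆ D ∩ D') :
    FlatPatchOn D D' G' ∨ FlatPatchOn D' D G' := by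
  obtain ⟨hDc, -, n, C, hC, hDC⟩ := hD
  obtain ⟨hD'c, -, n', C', hC', hD'C'⟩ := hD'
  have hopen : IsOpen (D ∪ D')ᶜ := (hDc.isClosed.union hD'c.isClosed).isOpen_compl
  have hG'open : IsOpen G' := hG' ▸ hopen.connectedComponentIn
  have hG'sub : G' ⊆ (D ∪ D')ᶜ := hG' ▸ connectedComponentIn_subset _ _
  have hfr : frontier G' ⊆ D ∪ D' := by
    simpa only [hG', compl_compl] using hopen.frontier_connectedComponentIn_subset x₀
  obtain ⟨z, hz, hzDD'⟩ := not_subset.mp hfront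
  by_cases hzD : z ∈ D
  · exact Or.inr <| flatPatchOn_of_mem_frontier hD'c.isClosed hC hDC hG'open
      (union_comm D D' ▸ hG'sub) (union_comm D D' ▸ hfr) hz fun hzD' => hzDD' ⟨hzD, hzD'⟩
  · exact Or.inl <| flatPatchOn_of_mem_frontier hDc.isClosed hC' hD'C' hG'open hG'sub hfr hz hzD

/-- if the boundary of the unbounded component `G'` of the common
exterior of two polyhedral scatterers is not contained in their intersection,
then (after possibly swapping the scatterers) one finds a flat hyperplane patch
in `(∂G' \ D) ∩ ∂G̃` around a point in the relative interior of a cell. -/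
theorem stmt16 {N : ℕ} (D D' : Set (EuclideanSpace ℝ (Fin N)))
    (hD : IsPolyhedralScatterer D) (hD' : IsPolyhedralScatterer D')
    (G' : Set (EuclideanSpace ℝ (Fin N)))
    (x₀ : EuclideanSpace ℝ (Fin N)) (hx₀ : x₀ ∈ (D ∪ D')ᶜ)
    (hG' : G' = connectedComponentIn (D ∪ D')ᶜ x₀)
    (R : ℝ) (hext : {x : EuclideanSpace ℝ (Fin N) | R < ‖x‖} ⊆ G')
    (hfront : ¬ frontier G' ⊆ D ∩ D') :
    FlatPatchOn D D' G' ∨ FlatPatchOn D' D G' :=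
  stmt16_general D D' hD hD' G' x₀ hG' hfront
end
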